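/- arXiv:2603.06747 — 2 statements merged into one kernel-verified Lean document; each statement's English description precedes it below -/
import Mathlib

section
/- For integers n ≥ 3 and m ≥ 3, let S_n and S_m be star graphs (the complete bipartite graphs K_{1,n} and K_{1,m}). Then AT(S_n +_R S_m) = 3. -/
/-!
Orient every edge of `S_n +_R S_m` from higher to lower rank, where (centre, centre) <
(leaf, centre) < (centre, leaf) < (leaf, leaf) < subdivision vertices. The orientation is
acyclic, so its only Eulerian subdigraph is empty, and every vertex has at most two lower
neighbours: `AT ≤ 3`. Conversely, in the copy of `R(S_n)` over the centre of `S_m`, the centre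
lies on a triangle with each leaf and its subdivision vertex. If all outdegrees were at most 1,
the centre would need an out-arc into each of two such triangles: `AT ≥ 3`.
-/

open scoped Classical

/-- The outdegree of a vertex `v` in a finite set of arcs `A`. -/
noncomputable def arcOutDeg {V : Type*} (A : Finset (V × V)) (v : V) : ℕ :=
  (A.filter fun a => a.1 = v).card

/-- The indegree of a vertex `v` in a finite set of arcs `A`. -/
noncomputable def arcInDeg {V : Type*} (A : Finset (V × V)) (v : V) : ℕ :=
  (A.filter fun a => a.2 = v).card

/-- `A` is an orientation of the simple graph `G`: every arc of `A` joins adjacent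
vertices, and every edge of `G` receives exactly one of its two possible directions. -/
def IsOrientation {V : Type*} (G : SimpleGraph V) (A : Finset (V × V)) : Prop :=
  (∀ a ∈ A, G.Adj a.1 a.2) ∧ ∀ u v : V, G.Adj u v → ((u, v) ∈ A ↔ (v, u) ∉ A)

/-- A set of arcs is Eulerian if at every vertex the indegree equals the outdegree. -/
def IsEulerianSub {V : Type*} (B : Finset (V × V)) : Prop :=
  ∀ v : V, arcInDeg B v = arcOutDeg B v

/-- An orientation (given by its arc set `A`) is an Alon–Tarsi orientation if the number
of its even Eulerian sub-digraphs differs from the number of its odd Eulerian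
sub-digraphs. -/
def IsATOrientation {V : Type*} (A : Finset (V × V)) : Prop :=
  (A.powerset.filter fun B => IsEulerianSub B ∧ Even B.card).card ≠
    (A.powerset.filter fun B => IsEulerianSub B ∧ ¬ Even B.card).card

/-- The Alon–Tarsi number of `G`: the least `k` such that `G` has an Alon–Tarsi
orientation with maximum outdegree at most `k - 1` (i.e. `< k`). -/
noncomputable def alonTarsiNumber {V : Type*} (G : SimpleGraph V) : ℕ :=
  sInf {k : ℕ | ∃ A : Finset (V × V),
    IsOrientation G A ∧ IsATOrientation A ∧ ∀ v : V, arcOutDeg A v < k}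

/-- A graph is `k`-degenerate if every nonempty (induced) subgraph has a vertex of
degree at most `k`. -/
def Degenerate {V : Type*} (k : ℕ) (G : SimpleGraph V) : Prop :=
  ∀ s : Finset V, s.Nonempty → ∃ v ∈ s, (s.filter fun u => G.Adj v u).card ≤ k

/-- The subdivision graph `S(G)`: each edge `uv` of `G` is replaced by a path `u-e-v`
through the new vertex `e` corresponding to `uv`. -/
def subdivisionGraph {V : Type*} (G : SimpleGraph V) : SimpleGraph (V ⊕ ↥G.edgeSet) :=
  SimpleGraph.fromRel fun a b =>
    match a, b with
    | Sum.inl u, Sum.inr e => u ∈ (e : Sym2 V)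
    | _, _ => False

/-- The graph `R(G)`: `G` together with, for each edge `uv`, a new vertex joined to
`u` and `v`. -/
def rGraph {V : Type*} (G : SimpleGraph V) : SimpleGraph (V ⊕ ↥G.edgeSet) :=
  SimpleGraph.fromRel fun a b =>
    match a, b with
    | Sum.inl u, Sum.inl v => G.Adj u v
    | Sum.inl u, Sum.inr e => u ∈ (e : Sym2 V)
    | _, _ => False

/-- The graph `Q(G)`: new vertices joined to the endpoints of their edges, and two new
vertices joined iff the corresponding edges of `G` share an endpoint; original
vertices are pairwise nonadjacent. -/
def qGraph {V : Type*} (G : SimpleGraph V) : SimpleGraph (V ⊕ ↥G.edgeSet) :=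
  SimpleGraph.fromRel fun a b =>
    match a, b with
    | Sum.inl u, Sum.inr e => u ∈ (e : Sym2 V)
    | Sum.inr e, Sum.inr f => e ≠ f ∧ ∃ u : V, u ∈ (e : Sym2 V) ∧ u ∈ (f : Sym2 V)
    | _, _ => False

/-- The total graph `T(G)`. -/
def tGraph {V : Type*} (G : SimpleGraph V) : SimpleGraph (V ⊕ ↥G.edgeSet) :=
  SimpleGraph.fromRel fun a b =>
    match a, b with
    | Sum.inl u, Sum.inl v => G.Adj u v
    | Sum.inl u, Sum.inr e => u ∈ (e : Sym2 V)
    | Sum.inr e, Sum.inr f => e ≠ f ∧ ∃ u : V, u ∈ (e : Sym2 V) ∧ u ∈ (f : Sym2 V)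
    | _, _ => False

/-- The `F`-sum construction: given a graph `K` on `V ⊕ E` (playing the role of `F(G)`,
whose "original" vertices are those of the form `Sum.inl u`) and a graph `H` on `W`,
two vertices `(u₁, u₂)` and `(v₁, v₂)` are adjacent iff either `u₁ = v₁` is an original
vertex and `u₂v₂ ∈ E(H)`, or `u₂ = v₂` and `u₁v₁ ∈ E(K)`. -/
def fSum {V E W : Type*} (K : SimpleGraph (V ⊕ E)) (H : SimpleGraph W) :
    SimpleGraph ((V ⊕ E) × W) :=
  SimpleGraph.fromRel fun a b =>
    (a.1 = b.1 ∧ (∃ u : V, a.1 = Sum.inl u) ∧ H.Adj a.2 b.2) ∨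
      (a.2 = b.2 ∧ K.Adj a.1 b.1)

/-- The `S`-sum `G +_S H`. -/
def sSum {V W : Type*} (G : SimpleGraph V) (H : SimpleGraph W) :
    SimpleGraph ((V ⊕ ↥G.edgeSet) × W) :=
  fSum (subdivisionGraph G) H

/-- The `R`-sum `G +_R H`. -/
def rSum {V W : Type*} (G : SimpleGraph V) (H : SimpleGraph W) :
    SimpleGraph ((V ⊕ ↥G.edgeSet) × W) :=
  fSum (rGraph G) H

/-- The `Q`-sum `G +_Q H`. -/
def qSum {V W : Type*} (G : SimpleGraph V) (H : SimpleGraph W) :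
    SimpleGraph ((V ⊕ ↥G.edgeSet) × W) :=
  fSum (qGraph G) H

/-- The `T`-sum `G +_T H`. -/
def tSum {V W : Type*} (G : SimpleGraph V) (H : SimpleGraph W) :
    SimpleGraph ((V ⊕ ↥G.edgeSet) × W) :=
  fSum (tGraph G) H

/-- The star graph `S_n = K_{1,n}`. -/
def starGraph (n : ℕ) : SimpleGraph (Fin 1 ⊕ Fin n) :=
  completeBipartiteGraph (Fin 1) (Fin n)

open Finset

section Orientation

variable {V : Type*}

lemma arcOutDeg_le_card_of_forall {A : Finset (V × V)} {v : V} {s : Finset V}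
    (h : ∀ a ∈ A, a.1 = v → a.2 ∈ s) : arcOutDeg A v ≤ #s :=
  card_le_card_of_injOn Prod.snd (fun a ha => h a (mem_filter.1 ha).1 (mem_filter.1 ha).2)
    fun _ ha _ hb hab => Prod.ext ((mem_filter.1 ha).2.trans (mem_filter.1 hb).2.symm) hab

lemma two_le_arcOutDeg {A : Finset (V × V)} {v a b : V} (hab : a ≠ b) (ha : (v, a) ∈ A)
    (hb : (v, b) ∈ A) : 2 ≤ arcOutDeg A v := by
  have hsub : ({(v, a), (v, b)} : Finset (V × V)) ⊆ A.filter fun p => p.1 = v := by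
    simp [insert_subset_iff, ha, hb]
  calc 2 = #({(v, a), (v, b)} : Finset (V × V)) := (card_pair (by simpa using hab)).symm
    _ ≤ arcOutDeg A v := card_le_card hsub

lemma IsOrientation.mem_or_mem {G : SimpleGraph V} {A : Finset (V × V)}
    (hA : IsOrientation G A) {u v : V} (huv : G.Adj u v) : (u, v) ∈ A ∨ (v, u) ∈ A := by
  by_contra! h
  exact h.1 ((hA.2 u v huv).2 h.2)

/-- Otherwise both other vertices point to `c`, and one of them also along their common edge. -/
lemma IsOrientation.mem_or_mem_of_triangle {G : SimpleGraph V} {A : Finset (V × V)}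
    (hA : IsOrientation G A) (hout : ∀ v, arcOutDeg A v < 2) {c a b : V} (hca : G.Adj c a)
    (hcb : G.Adj c b) (hab : G.Adj a b) : (c, a) ∈ A ∨ (c, b) ∈ A := by
  by_contra! h
  have hac := (hA.mem_or_mem hca).resolve_left h.1
  have hbc := (hA.mem_or_mem hcb).resolve_left h.2
  rcases hA.mem_or_mem hab with hab' | hba'
  · exact (hout a).not_ge (two_le_arcOutDeg hcb.ne hac hab')
  · exact (hout b).not_ge (two_le_arcOutDeg hca.ne hbc hba')

lemma IsOrientation.exists_two_le_arcOutDeg_of_triangles {G : SimpleGraph V}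
    {A : Finset (V × V)} (hA : IsOrientation G A) {c a b a' b' : V} (hca : G.Adj c a)
    (hcb : G.Adj c b) (hab : G.Adj a b) (hca' : G.Adj c a') (hcb' : G.Adj c b')
    (ha'b' : G.Adj a' b') (haa' : a ≠ a') (hab' : a ≠ b') (hba' : b ≠ a') (hbb' : b ≠ b') :
    ∃ v, 2 ≤ arcOutDeg A v := by
  by_contra! hout
  rcases hA.mem_or_mem_of_triangle hout hca hcb hab with h | h <;>
    rcases hA.mem_or_mem_of_triangle hout hca' hcb' ha'b' with h' | h' <;>
    exact (hout c).not_ge (two_le_arcOutDeg ‹_› h h')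

lemma IsEulerianSub.eq_empty_of_forall_rank_lt {α : Type*} [LinearOrder α]
    {B : Finset (V × V)} (hB : IsEulerianSub B) (r : V → α) (hr : ∀ a ∈ B, r a.2 < r a.1) :
    B = ∅ := by
  by_contra hne
  obtain ⟨b, hb, hmax⟩ := B.exists_max_image (fun a => r a.1) (nonempty_iff_ne_empty.2 hne)
  have hin : 0 < arcInDeg B b.1 := by
    rw [hB]
    exact card_pos.2 ⟨b, mem_filter.2 ⟨hb, rfl⟩⟩
  obtain ⟨a, ha⟩ := card_pos.1 hin
  rw [mem_filter] at ha
  have := hr a ha.1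
  rw [ha.2] at this
  exact (hmax a ha.1).not_gt this

lemma isATOrientation_of_forall_rank_lt {α : Type*} [LinearOrder α] {A : Finset (V × V)}
    (r : V → α) (hr : ∀ a ∈ A, r a.2 < r a.1) : IsATOrientation A := by
  have hempty : ∀ B ∈ A.powerset, IsEulerianSub B → B = ∅ := fun B hB hE =>
    hE.eq_empty_of_forall_rank_lt r fun a ha => hr a (mem_powerset.1 hB ha)
  have heven : (A.powerset.filter fun B => IsEulerianSub B ∧ Even #B) = {∅} := by
    ext B
    simp only [mem_filter, mem_singleton]
    refine ⟨fun h => hempty B h.1 h.2.1, ?_⟩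
    rintro rfl
    exact ⟨empty_mem_powerset A, fun v => by simp [arcInDeg, arcOutDeg], by simp⟩
  have hodd : (A.powerset.filter fun B => IsEulerianSub B ∧ ¬ Even #B) = ∅ :=
    filter_eq_empty_iff.2 fun B hB h => h.2 (by simp [hempty B hB h.1])
  rw [IsATOrientation, heven, hodd]
  simp

lemma alonTarsiNumber_eq_succ {G : SimpleGraph V} {A : Finset (V × V)} {k : ℕ}
    (hA : IsOrientation G A) (hAT : IsATOrientation A) (hle : ∀ v, arcOutDeg A v ≤ k)
    (hge : ∀ B, IsOrientation G B → ∃ v, k ≤ arcOutDeg B v) : alonTarsiNumber G = k + 1 := by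
  have hmem : k + 1 ∈ {k : ℕ | ∃ A : Finset (V × V),
      IsOrientation G A ∧ IsATOrientation A ∧ ∀ v : V, arcOutDeg A v < k} :=
    ⟨A, hA, hAT, fun v => Nat.lt_succ_of_le (hle v)⟩
  refine le_antisymm (Nat.sInf_le hmem) (le_csInf ⟨_, hmem⟩ ?_)
  rintro j ⟨B, hB, -, hout⟩
  obtain ⟨v, hv⟩ := hge B hB
  exact hv.trans_lt (hout v)

variable [Fintype V]

noncomputable def orientByRank {α : Type*} [LinearOrder α] (G : SimpleGraph V) (r : V → α) :
    Finset (V × V) :=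
  univ.filter fun a => G.Adj a.1 a.2 ∧ r a.2 < r a.1

variable {α : Type*} [LinearOrder α] {G : SimpleGraph V} {r : V → α}

lemma mem_orientByRank {a : V × V} :
    a ∈ orientByRank G r ↔ G.Adj a.1 a.2 ∧ r a.2 < r a.1 := by
  simp [orientByRank]

lemma isOrientation_orientByRank (hr : ∀ u v, G.Adj u v → r u ≠ r v) :
    IsOrientation G (orientByRank G r) := by
  refine ⟨fun a ha => (mem_orientByRank.1 ha).1, fun u v huv => ?_⟩
  simp only [mem_orientByRank, huv, huv.symm, true_and, not_lt]
  exact ⟨le_of_lt, fun h => h.lt_of_ne (hr v u huv.symm)⟩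

lemma isATOrientation_orientByRank : IsATOrientation (orientByRank G r) :=
  isATOrientation_of_forall_rank_lt r fun _ ha => (mem_orientByRank.1 ha).2

lemma arcOutDeg_orientByRank_le {v : V} {s : Finset V}
    (h : ∀ w, G.Adj v w → r w < r v → w ∈ s) : arcOutDeg (orientByRank G r) v ≤ #s :=
  arcOutDeg_le_card_of_forall fun a ha hav => by
    obtain ⟨hadj, hlt⟩ := mem_orientByRank.1 ha
    subst hav
    exact h a.2 hadj hlt

end Orientation

section Adjacency

variable {V E W : Type*}

lemma fSum_adj {K : SimpleGraph (V ⊕ E)} {H : SimpleGraph W} {a b : (V ⊕ E) × W} :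
    (fSum K H).Adj a b ↔
      (a.1 = b.1 ∧ (∃ u : V, a.1 = .inl u) ∧ H.Adj a.2 b.2) ∨ (a.2 = b.2 ∧ K.Adj a.1 b.1) := by
  simp only [fSum, SimpleGraph.fromRel_adj]
  constructor
  · rintro ⟨-, h | h⟩
    · exact h
    · rcases h with ⟨h1, ⟨u, hu⟩, h2⟩ | ⟨h1, h2⟩
      · exact .inl ⟨h1.symm, ⟨u, h1 ▸ hu⟩, h2.symm⟩
      · exact .inr ⟨h1.symm, h2.symm⟩
  · intro h
    refine ⟨?_, .inl h⟩
    rintro rfl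
    rcases h with ⟨-, -, h⟩ | ⟨-, h⟩ <;> exact h.ne rfl

variable {G : SimpleGraph V} {u v : V} {e f : G.edgeSet}

@[simp] lemma rGraph_adj_inl_inl : (rGraph G).Adj (.inl u) (.inl v) ↔ G.Adj u v := by
  simp only [rGraph, SimpleGraph.fromRel_adj]
  exact ⟨fun h => h.2.elim id fun h => h.symm,
    fun h => ⟨fun huv => h.ne (Sum.inl_injective huv), .inl h⟩⟩

@[simp] lemma rGraph_adj_inl_inr : (rGraph G).Adj (.inl u) (.inr e) ↔ u ∈ (e : Sym2 V) := by
  simp [rGraph]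

@[simp] lemma rGraph_adj_inr_inl : (rGraph G).Adj (.inr e) (.inl u) ↔ u ∈ (e : Sym2 V) := by
  simp [rGraph]

@[simp] lemma rGraph_adj_inr_inr : ¬ (rGraph G).Adj (.inr e) (.inr f) := by
  simp [rGraph]

end Adjacency

section StarRSum

variable {n m : ℕ}

lemma starGraph_adj {a b : Fin 1 ⊕ Fin n} :
    (starGraph n).Adj a b ↔ a.isLeft ∧ b.isRight ∨ a.isRight ∧ b.isLeft :=
  Iff.of_eq (completeBipartiteGraph_adj ..)

abbrev StarRSumVertex (n m : ℕ) : Type :=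
  ((Fin 1 ⊕ Fin n) ⊕ ↥(starGraph n).edgeSet) × (Fin 1 ⊕ Fin m)

-- Chosen so that every vertex has at most two neighbours of smaller rank.
def starRSumRank : StarRSumVertex n m → ℕ
  | (.inl (.inl _), .inl _) => 0
  | (.inl (.inr _), .inl _) => 1
  | (.inl (.inl _), .inr _) => 2
  | (.inl (.inr _), .inr _) => 3
  | (.inr _, _) => 4

lemma starRSumRank_ne_of_adj {u v : StarRSumVertex n m}
    (h : (rSum (starGraph n) (starGraph m)).Adj u v) : starRSumRank u ≠ starRSumRank v := by
  rw [rSum, fSum_adj] at h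
  obtain ⟨(x | x) | e, w | w⟩ := u <;> obtain ⟨(y | y) | f, z | z⟩ := v <;>
    simp [starRSumRank, starGraph_adj] at h ⊢

noncomputable def starRSumLower : StarRSumVertex n m → Finset (StarRSumVertex n m)
  | (.inl (.inl _), .inl _) => ∅
  | (.inl (.inr _), .inl z) => {(.inl (.inl 0), .inl z)}
  | (.inl (.inl x), .inr _) => {(.inl (.inl x), .inl 0)}
  | (.inl (.inr x), .inr z) => {(.inl (.inr x), .inl 0), (.inl (.inl 0), .inr z)}
  | (.inr e, z) => (e : Sym2 _).toFinset.image fun x => (.inl x, z)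

lemma card_starRSumLower_le (v : StarRSumVertex n m) : #(starRSumLower v) ≤ 2 := by
  obtain ⟨(x | x) | e, z | z⟩ := v <;>
    first
    | exact card_image_le.trans ((Multiset.toFinset_card_le _).trans (Sym2.card_toMultiset _).le)
    | exact card_le_two
    | simp [starRSumLower]

lemma mem_starRSumLower {v w : StarRSumVertex n m}
    (hadj : (rSum (starGraph n) (starGraph m)).Adj v w) (hlt : starRSumRank w < starRSumRank v) :
    w ∈ starRSumLower v := by
  rw [rSum, fSum_adj] at hadj
  obtain ⟨(x | x) | e, z | z⟩ := v <;> obtain ⟨(y | y) | f, t | t⟩ := w <;>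
    simp [starRSumRank, starRSumLower, starGraph_adj, Fin.fin_one_eq_zero] at hadj hlt ⊢ <;>
    simp [hadj]

lemma starRSum_isTriangle (i : Fin n) (hi : s(.inl 0, .inr i) ∈ (starGraph n).edgeSet) :
    (rSum (starGraph n) (starGraph m)).Adj (.inl (.inl 0), .inl 0) (.inl (.inr i), .inl 0) ∧
      (rSum (starGraph n) (starGraph m)).Adj (.inl (.inl 0), .inl 0) (.inr ⟨_, hi⟩, .inl 0) ∧
      (rSum (starGraph n) (starGraph m)).Adj (.inl (.inr i), .inl 0) (.inr ⟨_, hi⟩, .inl 0) := by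
  simp [rSum, fSum_adj, starGraph_adj]

lemma starRSum_exists_two_le_arcOutDeg (hn : 2 ≤ n)
    {A : Finset (StarRSumVertex n m × StarRSumVertex n m)}
    (hA : IsOrientation (rSum (starGraph n) (starGraph m)) A) : ∃ v, 2 ≤ arcOutDeg A v := by
  have hedge (i : Fin n) : s(.inl 0, .inr i) ∈ (starGraph n).edgeSet := by
    simp [starGraph_adj]
  obtain ⟨h₀₁, h₀₂, h₁₂⟩ := starRSum_isTriangle (m := m) ⟨0, by omega⟩ (hedge _)
  obtain ⟨h₀₁', h₀₂', h₁₂'⟩ := starRSum_isTriangle (m := m) ⟨1, by omega⟩ (hedge _)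
  exact hA.exists_two_le_arcOutDeg_of_triangles h₀₁ h₀₂ h₁₂ h₀₁' h₀₂' h₁₂'
    (by simp) (by simp) (by simp) (by simp)

end StarRSum

theorem stmt12_general (n m : ℕ) (hn : 3 ≤ n) :
    alonTarsiNumber (rSum (starGraph n) (starGraph m)) = 3 :=
  alonTarsiNumber_eq_succ (isOrientation_orientByRank fun _ _ => starRSumRank_ne_of_adj)
    isATOrientation_orientByRank
    (fun v => (arcOutDeg_orientByRank_le fun _ => mem_starRSumLower).trans
      (card_starRSumLower_le v))
    fun _ hA => starRSum_exists_two_le_arcOutDeg (by omega) hA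

/-- `AT(S_n +_R S_m) = 3` for `n, m ≥ 3`. -/
theorem stmt12 (n m : ℕ) (hn : 3 ≤ n) (hm : 3 ≤ m) :
    alonTarsiNumber (rSum (starGraph n) (starGraph m)) = 3 :=
  stmt12_general n m hn
end

section
/- Let G be a k-degenerate graph with maximum degree Δ(G) and let H be an l-degenerate graph. Then AT(G +_T H) ≤ max{2Δ(G), k + l} + 1. -/
open scoped Classical

/-!
Orienting each edge of a `d`-degenerate graph from the later to the earlier endpoint in a
degeneracy ordering gives an acyclic orientation with outdegrees at most `d`. Its only Eulerian
subdigraph is the empty one, so it is an Alon–Tarsi orientation and `AT ≤ d + 1`.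

It thus suffices that `G +_T H` is `max (2Δ(G)) (k + l)`-degenerate. The neighbours of a vertex
`(e, w)` with `e = ab ∈ E(G)` are copies of the `T(G)`-neighbours of `e`, so there are at most
`deg a + deg b ≤ 2Δ(G)` of them. A nonempty set of vertices `(v, w)` with `v ∈ V(G)` contains one
with at most `k + l` neighbours inside it: choose `v` with at most `k` `G`-neighbours among the
first coordinates, then `w` with at most `l` `H`-neighbours in the fibre over `v`.
-/

open Finset

section AlonTarsi

variable {U : Type*}

lemma Degenerate.exists_rankOn {d : ℕ} {K : SimpleGraph U} (h : Degenerate d K) (s : Finset U) :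
    ∃ r : U → ℕ, Set.InjOn r s ∧ ∀ v ∈ s, #{u ∈ s | K.Adj v u ∧ r u < r v} ≤ d := by
  induction s using Finset.strongInduction with
  | _ s ih =>
    rcases s.eq_empty_or_nonempty with rfl | hs
    · exact ⟨fun _ => 0, by simp, by simp⟩
    obtain ⟨v, hv, hdeg⟩ := h s hs
    obtain ⟨r, hr, hrd⟩ := ih (s.erase v) (erase_ssubset hv)
    have hlt : ∀ u ∈ s.erase v, r u < (s.erase v).sup r + 1 :=
      fun u hu => Nat.lt_succ_of_le (le_sup hu)
    set r' := Function.update r v ((s.erase v).sup r + 1)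
    have hr'v : ∀ u ∈ s.erase v, r' u = r u ∧ r' u < r' v := fun u hu => by
      have huv := (mem_erase.1 hu).1
      simpa [r', huv] using hlt u hu
    refine ⟨r', ?_, fun u hu => ?_⟩
    · rw [← insert_erase hv, coe_insert, Set.injOn_insert (by simp)]
      refine ⟨fun x hx y hy hxy => hr hx hy ?_, fun ⟨u, hu, hvu⟩ => ?_⟩
      · rwa [← (hr'v x hx).1, ← (hr'v y hy).1]
      · exact (hr'v u hu).2.ne hvu
    obtain rfl | huv := eq_or_ne u v
    · refine (card_le_card fun x hx => ?_).trans hdeg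
      exact mem_filter.2 ⟨(mem_filter.1 hx).1, (mem_filter.1 hx).2.1⟩
    refine (card_le_card fun x hx => ?_).trans (hrd u (mem_erase.2 ⟨huv, hu⟩))
    simp only [mem_filter, mem_erase] at hx ⊢
    have hxv : x ≠ v := by
      rintro rfl
      exact (hr'v u (mem_erase.2 ⟨huv, hu⟩)).2.asymm hx.2.2
    rw [← (hr'v x (mem_erase.2 ⟨hxv, hx.1⟩)).1, ← (hr'v u (mem_erase.2 ⟨huv, hu⟩)).1]
    exact ⟨⟨hxv, hx.1⟩, hx.2⟩

lemma Degenerate.exists_rank [Fintype U] {d : ℕ} {K : SimpleGraph U} (h : Degenerate d K) :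
    ∃ r : U → ℕ, Function.Injective r ∧ ∀ v, #{u | K.Adj v u ∧ r u < r v} ≤ d := by
  obtain ⟨r, hr, hrd⟩ := h.exists_rankOn univ
  exact ⟨r, Set.injOn_univ.1 (by simpa using hr), fun v => hrd v (mem_univ v)⟩

noncomputable def rankOrientation [Fintype U] (K : SimpleGraph U) (r : U → ℕ) :
    Finset (U × U) :=
  {a | K.Adj a.1 a.2 ∧ r a.2 < r a.1}

lemma isOrientation_rankOrientation [Fintype U] (K : SimpleGraph U) {r : U → ℕ}
    (hr : Function.Injective r) : IsOrientation K (rankOrientation K r) := by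
  refine ⟨fun a ha => (mem_filter.1 ha).2.1, fun u v huv => ?_⟩
  have := hr.ne huv.ne
  simp only [rankOrientation, mem_filter, mem_univ, true_and, huv, huv.symm]
  omega

lemma arcOutDeg_rankOrientation [Fintype U] (K : SimpleGraph U) (r : U → ℕ) (v : U) :
    arcOutDeg (rankOrientation K r) v = #{u | K.Adj v u ∧ r u < r v} := by
  refine card_nbij' Prod.snd (fun u => (v, u)) ?_ ?_ ?_ ?_
  · rintro ⟨x, y⟩
    simp only [rankOrientation, coe_filter, mem_filter, mem_univ, true_and]
    rintro ⟨h, rfl⟩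
    exact h
  · intro u
    simp [rankOrientation]
  · rintro ⟨x, y⟩
    simp +contextual [rankOrientation]
  · intro u
    simp

lemma IsEulerianSub.eq_empty_of_rank_lt {B : Finset (U × U)} (hB : IsEulerianSub B)
    (r : U → ℕ) (hlt : ∀ a ∈ B, r a.2 < r a.1) : B = ∅ := by
  -- the tail of an arc with maximal tail rank has an incoming arc, whose tail ranks higher
  by_contra hne
  obtain ⟨a, haB, hmax⟩ := B.exists_max_image (fun a => r a.1) (nonempty_iff_ne_empty.2 hne)
  have hin : 0 < arcInDeg B a.1 := by
    rw [hB, arcOutDeg, card_pos]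
    exact ⟨a, mem_filter.2 ⟨haB, rfl⟩⟩
  obtain ⟨b, hb⟩ := card_pos.1 hin
  obtain ⟨hbB, hba⟩ := mem_filter.1 hb
  have := hlt b hbB
  have := hmax b hbB
  rw [hba] at *
  omega

lemma isATOrientation_of_eulerian_eq_empty {A : Finset (U × U)}
    (h : ∀ B ⊆ A, IsEulerianSub B → B = ∅) : IsATOrientation A := by
  have hempty : IsEulerianSub (∅ : Finset (U × U)) := fun v => by simp [arcInDeg, arcOutDeg]
  have heven : {B ∈ A.powerset | IsEulerianSub B ∧ Even #B} = {∅} := by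
    ext B
    simp only [mem_filter, mem_powerset, mem_singleton]
    constructor
    · exact fun ⟨hBA, hB, _⟩ => h B hBA hB
    · rintro rfl
      exact ⟨empty_subset A, hempty, by simp⟩
  have hodd : {B ∈ A.powerset | IsEulerianSub B ∧ ¬Even #B} = ∅ := by
    ext B
    simp only [mem_filter, mem_powerset, notMem_empty, iff_false]
    rintro ⟨hBA, hB, hodd⟩
    simp [h B hBA hB] at hodd
  rw [IsATOrientation, heven, hodd]
  simp

theorem alonTarsiNumber_le_of_degenerate [Fintype U] {d : ℕ} {K : SimpleGraph U}
    (h : Degenerate d K) : alonTarsiNumber K ≤ d + 1 := by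
  obtain ⟨r, hr, hrd⟩ := h.exists_rank
  refine Nat.sInf_le ⟨rankOrientation K r, isOrientation_rankOrientation K hr, ?_, fun v => ?_⟩
  · refine isATOrientation_of_eulerian_eq_empty fun B hBA hB => hB.eq_empty_of_rank_lt r ?_
    exact fun a ha => (mem_filter.1 (hBA ha)).2.2
  · rw [arcOutDeg_rankOrientation]
    exact Nat.lt_succ_of_le (hrd v)

end AlonTarsi

section FSum

variable {V E W : Type*} (K : SimpleGraph (V ⊕ E)) (H : SimpleGraph W)

lemma fSum_adj_s17 {p q : (V ⊕ E) × W} :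
    (fSum K H).Adj p q ↔
      (p.1 = q.1 ∧ (∃ u, p.1 = Sum.inl u) ∧ H.Adj p.2 q.2) ∨ (p.2 = q.2 ∧ K.Adj p.1 q.1) := by
  rw [fSum, SimpleGraph.fromRel_adj]
  constructor
  · rintro ⟨-, h | (⟨h₁, ⟨u, hu⟩, h₂⟩ | ⟨h₁, h₂⟩)⟩
    · exact h
    · exact Or.inl ⟨h₁.symm, ⟨u, h₁ ▸ hu⟩, h₂.symm⟩
    · exact Or.inr ⟨h₁.symm, h₂.symm⟩
  · rintro (h | h)
    · exact ⟨fun hpq => h.2.2.ne (congrArg Prod.snd hpq), Or.inl (Or.inl h)⟩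
    · exact ⟨fun hpq => h.2.ne (congrArg Prod.fst hpq), Or.inl (Or.inr h)⟩

lemma fSum_adj_inr {e : E} {w : W} {q : (V ⊕ E) × W} :
    (fSum K H).Adj (Sum.inr e, w) q ↔ q.2 = w ∧ K.Adj (Sum.inr e) q.1 := by
  simp [fSum_adj_s17, eq_comm]

lemma card_filter_fSum_adj_inr_le [Fintype (V ⊕ E)] (s : Finset ((V ⊕ E) × W)) (e : E)
    (w : W) :
    #{q ∈ s | (fSum K H).Adj (Sum.inr e, w) q} ≤ K.degree (Sum.inr e) := by
  rw [← K.card_neighborFinset_eq_degree]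
  refine card_le_card_of_injOn Prod.fst (fun q hq => ?_) fun q hq q' hq' hqq' => ?_
  · simp_all [fSum_adj_inr]
  · simp only [coe_filter, fSum_adj_inr] at hq hq'
    exact Prod.ext hqq' (hq.2.1.trans hq'.2.1.symm)

lemma exists_card_filter_fSum_adj_le_of_forall_inl {k l : ℕ} (hKV : Degenerate k (K.comap Sum.inl))
    (hH : Degenerate l H) {s : Finset ((V ⊕ E) × W)} (hs : s.Nonempty)
    (hsV : ∀ p ∈ s, ∃ u, p.1 = Sum.inl u) :
    ∃ p ∈ s, #{q ∈ s | (fSum K H).Adj p q} ≤ k + l := by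
  set T := (s.image Prod.fst).toLeft
  obtain ⟨v, hvT, hv⟩ := hKV T <| by
    obtain ⟨p, hp⟩ := hs
    obtain ⟨u, hu⟩ := hsV p hp
    exact ⟨u, mem_toLeft.2 (hu ▸ mem_image_of_mem Prod.fst hp)⟩
  set fibre := s.preimage (Prod.mk (Sum.inl v)) (Prod.mk_right_injective _).injOn
  obtain ⟨w, hwF, hw⟩ := hH fibre <| by
    obtain ⟨p, hp, hpv⟩ := mem_image.1 (mem_toLeft.1 hvT)
    exact ⟨p.2, mem_preimage.2 (by rwa [← hpv])⟩
  refine ⟨(Sum.inl v, w), mem_preimage.1 hwF, ?_⟩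
  calc #{q ∈ s | (fSum K H).Adj (Sum.inl v, w) q}
      ≤ #(({x ∈ fibre | H.Adj w x}).image (Prod.mk (Sum.inl v)) ∪
          ({u ∈ T | (K.comap Sum.inl).Adj v u}).image fun u => (Sum.inl u, w)) := by
        refine card_le_card fun ⟨x, y⟩ hq => ?_
        obtain ⟨hqs, hq⟩ := mem_filter.1 hq
        obtain ⟨u, rfl : x = _⟩ := hsV _ hqs
        rcases (fSum_adj_s17 K H).1 hq with ⟨huv, -, hwy⟩ | ⟨rfl, hvu⟩
        · obtain rfl := Sum.inl_injective huv
          exact mem_union_left _ (mem_image_of_mem _ (by simpa [fibre, hqs] using hwy))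
        · refine mem_union_right _ (mem_image_of_mem _ (mem_filter.2 ⟨?_, hvu⟩))
          exact mem_toLeft.2 (mem_image_of_mem Prod.fst hqs)
    _ ≤ l + k :=
        (card_union_le _ _).trans (add_le_add (card_image_le.trans hw) (card_image_le.trans hv))
    _ = k + l := add_comm l k

theorem fSum_degenerate [Fintype (V ⊕ E)] {D k l : ℕ} (hK : ∀ e, K.degree (Sum.inr e) ≤ D)
    (hKV : Degenerate k (K.comap Sum.inl)) (hH : Degenerate l H) :
    Degenerate (max D (k + l)) (fSum K H) := by
  intro s hs
  by_cases hE : ∃ p ∈ s, ∃ e, p.1 = Sum.inr e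
  · obtain ⟨⟨_, w⟩, hp, e, rfl⟩ := hE
    exact ⟨_, hp, (card_filter_fSum_adj_inr_le K H s e w).trans ((hK e).trans (le_max_left _ _))⟩
  · have hsV : ∀ p ∈ s, ∃ u, p.1 = Sum.inl u := fun p hp => by
      rcases hp1 : p.1 with u | e
      · exact ⟨u, rfl⟩
      · exact absurd ⟨p, hp, e, hp1⟩ hE
    obtain ⟨p, hp, hpd⟩ := exists_card_filter_fSum_adj_le_of_forall_inl K H hKV hH hs hsV
    exact ⟨p, hp, hpd.trans (le_max_right _ _)⟩

end FSum

section TotalGraph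

variable {V : Type*} (G : SimpleGraph V)

@[simp] lemma tGraph_adj_inl_inl {u v : V} :
    (tGraph G).Adj (Sum.inl u) (Sum.inl v) ↔ G.Adj u v := by
  simp only [tGraph, SimpleGraph.fromRel_adj, ne_eq, Sum.inl.injEq, G.adj_comm v u, or_self,
    and_iff_right_iff_imp]
  exact fun h => h.ne

@[simp] lemma tGraph_adj_inr_inl {e : G.edgeSet} {u : V} :
    (tGraph G).Adj (Sum.inr e) (Sum.inl u) ↔ u ∈ (e : Sym2 V) := by
  simp [tGraph, SimpleGraph.fromRel_adj]

@[simp] lemma tGraph_adj_inr_inr {e f : G.edgeSet} :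
    (tGraph G).Adj (Sum.inr e) (Sum.inr f) ↔
      e ≠ f ∧ ∃ u : V, u ∈ (e : Sym2 V) ∧ u ∈ (f : Sym2 V) := by
  simp only [tGraph, SimpleGraph.fromRel_adj, ne_eq, Sum.inr.injEq]
  constructor
  · rintro ⟨-, h | ⟨hfe, u, huf, hue⟩⟩
    exacts [h, ⟨Ne.symm hfe, u, hue, huf⟩]
  · rintro ⟨hef, h⟩
    exact ⟨hef, Or.inl ⟨hef, h⟩⟩

lemma tGraph_comap_inl : (tGraph G).comap Sum.inl = G := by
  ext u v
  exact tGraph_adj_inl_inl G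

lemma tGraph_degree_inr_le [Fintype V] (e : G.edgeSet) :
    (tGraph G).degree (Sum.inr e) ≤ 2 * G.maxDegree := by
  obtain ⟨e, he⟩ := e
  induction e using Sym2.ind with | _ a b => ?_
  -- a neighbour of `ab` is charged to an endpoint of `ab` and an edge of `G` at that endpoint
  let φ : V ⊕ G.edgeSet → V × Sym2 V
    | Sum.inl u => (u, s(a, b))
    | Sum.inr f => (if a ∈ (f : Sym2 V) then a else b, f)
  calc (tGraph G).degree (Sum.inr ⟨s(a, b), he⟩)
      = #((tGraph G).neighborFinset (Sum.inr ⟨s(a, b), he⟩)) :=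
        ((tGraph G).card_neighborFinset_eq_degree _).symm
    _ ≤ #({a} ×ˢ G.incidenceFinset a ∪ {b} ×ˢ G.incidenceFinset b) :=
        card_le_card_of_injOn φ ?_ ?_
    _ ≤ G.degree a + G.degree b := by
        refine (card_union_le _ _).trans ?_
        simp [G.card_incidenceFinset_eq_degree]
    _ ≤ 2 * G.maxDegree := by
        have := G.degree_le_maxDegree a
        have := G.degree_le_maxDegree b
        omega
  · rintro (u | f) hx
    · simp only [mem_coe, SimpleGraph.mem_neighborFinset, tGraph_adj_inr_inl,
        Sym2.mem_iff] at hx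
      rcases hx with rfl | rfl <;> simp_all [φ, SimpleGraph.incidenceSet]
    · by_cases ha : a ∈ (f : Sym2 V) <;> simp_all [φ, SimpleGraph.incidenceSet]
  · rintro (u | f) hx (u' | f') hy hxy
    · exact congrArg Sum.inl (congrArg Prod.fst hxy)
    · simp only [mem_coe, SimpleGraph.mem_neighborFinset, tGraph_adj_inr_inr] at hy
      exact (hy.1 (Subtype.ext (congrArg Prod.snd hxy))).elim
    · simp only [mem_coe, SimpleGraph.mem_neighborFinset, tGraph_adj_inr_inr] at hx
      exact (hx.1 (Subtype.ext (congrArg Prod.snd hxy).symm)).elim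
    · exact congrArg Sum.inr (Subtype.ext (congrArg Prod.snd hxy))

end TotalGraph

/-- if `G` is `k`-degenerate with maximum degree `Δ(G)` and `H` is
`l`-degenerate, then `AT(G +_T H) ≤ max (2Δ(G)) (k + l) + 1`. -/
theorem stmt17 {V W : Type*} [Fintype V] [Fintype W]
    (k l : ℕ) (G : SimpleGraph V) (H : SimpleGraph W)
    (hG : Degenerate k G) (hH : Degenerate l H) :
    alonTarsiNumber (tSum G H) ≤ max (2 * G.maxDegree) (k + l) + 1 :=
  alonTarsiNumber_le_of_degenerate <|
    fSum_degenerate (tGraph G) H (tGraph_degree_inr_le G) (by rwa [tGraph_comap_inl]) hH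
end
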